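/- For all impartial games G and H, the variation set of the disjunctive sum satisfies 𝒱(G + H) = (𝒱(G) ⊕ mex 𝒱(H)) ∪ (𝒱(H) ⊕ mex 𝒱(G)), where A ⊕ x := {a XOR x | a ∈ A} with XOR being bitwise exclusive or on natural numbers. -/

import Mathlib

/-- mex (minimum excludant) of a set of naturals. -/
noncomputable def mexS (A : Set ℕ) : ℕ := sInf {n | n ∉ A}

/-- The colon operation on sets of naturals:
`A : B = A ∪ {x_i | i ∈ B}` where `x_0 < x_1 < ⋯` enumerates `ℕ \ A`. -/
noncomputable def colonS (A B : Set ℕ) : Set ℕ :=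
  A ∪ (fun i => Nat.nth (fun n => n ∉ A) i) '' B

/-- Elementwise addition of a natural number: `A + b = {a + b | a ∈ A}`. -/
def addS (A : Set ℕ) (b : ℕ) : Set ℕ := (· + b) '' A

/-- Elementwise bitwise XOR: `A ⊕ x = {a XOR x | a ∈ A}`. -/
def xorS (A : Set ℕ) (x : ℕ) : Set ℕ := (fun a => a ^^^ x) '' A

/-- `Gn n` is the set of (hereditarily finite) games born by day `n`:
`Gn 0 = {∅}`, `Gn (n+1) = 2^(Gn n)`. -/
noncomputable def Gn : ℕ → ZFSet
  | 0 => {∅}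
  | n + 1 => ZFSet.powerset (Gn n)

/-- An impartial game: a hereditarily finite set. -/
def IsGame (G : ZFSet) : Prop := ∃ n, G ∈ Gn n

/-- Birthday: least `n` with `G ∈ Gn n`. -/
noncomputable def birthday (G : ZFSet) : ℕ := sInf {n | G ∈ Gn n}

/-- `g` is the Grundy-number function: `g G = mex {g G' | G' ∈ G}`. -/
def IsGrundy (g : ZFSet → ℕ) : Prop :=
  ∀ G : ZFSet, g G = mexS {n | ∃ x ∈ G, g x = n}

/-- The variation set of `G` with respect to a Grundy function `g`:
the set of Grundy values of the options of `G`. -/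
def vset (g : ZFSet → ℕ) (G : ZFSet) : Set ℕ := {n | ∃ x ∈ G, g x = n}

/-- `f` is the ordinal sum with substitution: `f G H Ĥ = G :_{Ĥ} H`,
defined by `G :_{Ĥ} H = {G' :_{Ĥ} Ĥ | G' ∈ G} ∪ {G :_{Ĥ} H' | H' ∈ H}`. -/
def IsOSub (f : ZFSet → ZFSet → ZFSet → ZFSet) : Prop :=
  ∀ G H Hh x : ZFSet,
    x ∈ f G H Hh ↔ (∃ G' ∈ G, x = f G' Hh Hh) ∨ (∃ H' ∈ H, x = f G H' Hh)

/-- `s` is the ordinal sum: `G : H = {G' | G' ∈ G} ∪ {G : H' | H' ∈ H}`. -/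
def IsOSum (s : ZFSet → ZFSet → ZFSet) : Prop :=
  ∀ G H x : ZFSet, x ∈ s G H ↔ x ∈ G ∨ (∃ H' ∈ H, x = s G H')

/-- `d` is the disjunctive sum: `G + H = {G' + H | G' ∈ G} ∪ {G + H' | H' ∈ H}`. -/
def IsDSum (d : ZFSet → ZFSet → ZFSet) : Prop :=
  ∀ G H x : ZFSet, x ∈ d G H ↔ (∃ G' ∈ G, x = d G' H) ∨ (∃ H' ∈ H, x = d G H')

/-- The nimber `*n = {*m | m < n}`. -/
noncomputable def nim : ℕ → ZFSet
  | 0 => ∅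
  | n + 1 => insert (nim n) (nim n)

/-- Left-associated chain of ordinal sums with substitution:
`chain f X Xh s k = X s :_{Xh (s+1)} X (s+1) :_{Xh (s+2)} ⋯ :_{Xh (s+k)} X (s+k)`. -/
noncomputable def chain (f : ZFSet → ZFSet → ZFSet → ZFSet)
    (X Xh : ℕ → ZFSet) (s : ℕ) : ℕ → ZFSet
  | 0 => X s
  | k + 1 => f (chain f X Xh s k) (X (s + k + 1)) (Xh (s + k + 1))

theorem ZFSet.mem_toSet (a u : ZFSet) : a ∈ u.toSet ↔ a ∈ u := Iff.rfl

theorem ZFSet.toSet_subset_iff {x y : ZFSet} : x.toSet ⊆ y.toSet ↔ x ⊆ y := ZFSet.coe_subset_coe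

theorem ZFSet.toSet_injective : Function.Injective ZFSet.toSet := SetLike.coe_injective

@[simp] theorem ZFSet.toSet_empty : ZFSet.toSet ∅ = ∅ := ZFSet.coe_empty

@[simp] theorem ZFSet.toSet_singleton (x : ZFSet) : ZFSet.toSet {x} = {x} := ZFSet.coe_singleton x

lemma mexS_not_mem {A : Set ℕ} (h : A.Finite) : mexS A ∉ A := by
  have hne : {n | n ∉ A}.Nonempty := h.infinite_compl.nonempty
  exact Nat.sInf_mem hne

lemma mem_of_lt_mexS {A : Set ℕ} {k : ℕ} (h : k < mexS A) : k ∈ A := by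
  by_contra hk
  exact absurd (Nat.sInf_le hk) (not_le.mpr h)

lemma mexS_xor {A B : Set ℕ} (hA : A.Finite) (hB : B.Finite) :
    mexS (xorS A (mexS B) ∪ xorS B (mexS A)) = mexS A ^^^ mexS B := by
  set a := mexS A with ha
  set b := mexS B with hb
  have hnot : a ^^^ b ∉ xorS A b ∪ xorS B a := by
    rintro (⟨x, hx, he⟩ | ⟨y, hy, he⟩)
    · have hx' : x = a := by
        have h := congrArg (· ^^^ b) he
        simpa [xor_cancel_right] using h
      rw [hx', ha] at hx
      exact mexS_not_mem hA hx
    · have hy' : y = b := by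
        have h := congrArg (· ^^^ a) he
        simp only [xor_cancel_right] at h
        rwa [Nat.xor_comm a b, xor_cancel_right] at h
      rw [hy', hb] at hy
      exact mexS_not_mem hB hy
  have hlt : ∀ k < a ^^^ b, k ∈ xorS A b ∪ xorS B a := by
    intro k hk
    rcases Nat.lt_xor_cases hk with h1 | h2
    · exact Or.inl ⟨k ^^^ b, mem_of_lt_mexS h1, by simp [xor_cancel_right]⟩
    · exact Or.inr ⟨k ^^^ a, mem_of_lt_mexS h2, by simp [xor_cancel_right]⟩
  have hle : mexS (xorS A b ∪ xorS B a) ≤ a ^^^ b := Nat.sInf_le hnot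
  rcases lt_or_eq_of_le hle with h | h
  · have hmem : mexS (xorS A b ∪ xorS B a) ∈ {n | n ∉ xorS A b ∪ xorS B a} :=
      Nat.sInf_mem ⟨a ^^^ b, hnot⟩
    exact absurd (hlt _ h) hmem
  · exact h

lemma Gn_zero_eq {G : ZFSet} (hG : G ∈ Gn 0) : G = ∅ := by
  simpa [Gn] using hG

lemma option_mem_Gn {n : ℕ} {G x : ZFSet} (hG : G ∈ Gn (n + 1)) (hx : x ∈ G) : x ∈ Gn n := by
  rw [Gn, ZFSet.mem_powerset] at hG
  exact hG hx

lemma Gn_finite : ∀ n, (Gn n).toSet.Finite := by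
  intro n
  induction n with
  | zero => simp [Gn]
  | succ n ih =>
    have heq : (Gn (n + 1)).toSet = ZFSet.toSet ⁻¹' {S | S ⊆ (Gn n).toSet} := by
      ext y
      simp only [ZFSet.mem_toSet, Set.mem_preimage, Set.mem_setOf_eq, Gn, ZFSet.mem_powerset]
      exact ZFSet.toSet_subset_iff.symm
    rw [heq]
    exact (ih.finite_subsets).preimage (fun x _ y _ h => ZFSet.toSet_injective h)

lemma game_toSet_finite {n : ℕ} {G : ZFSet} (hG : G ∈ Gn n) : G.toSet.Finite := by
  cases n with
  | zero => rw [Gn_zero_eq hG]; simp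
  | succ n =>
    rw [Gn, ZFSet.mem_powerset] at hG
    exact (Gn_finite n).subset (ZFSet.toSet_subset_iff.mpr hG)

lemma vset_finite {g : ZFSet → ℕ} {n : ℕ} {G : ZFSet} (hG : G ∈ Gn n) :
    (vset g G).Finite := by
  have : vset g G = g '' G.toSet := by
    ext k
    simp [vset, ZFSet.mem_toSet, Set.mem_image]
  rw [this]
  exact (game_toSet_finite hG).image g

lemma vset_dsum {d : ZFSet → ZFSet → ZFSet} (hd : IsDSum d) {g : ZFSet → ℕ} {G H : ZFSet}
    (h1 : ∀ G' ∈ G, g (d G' H) = g G' ^^^ g H)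
    (h2 : ∀ H' ∈ H, g (d G H') = g G ^^^ g H') :
    vset g (d G H) = xorS (vset g G) (g H) ∪ xorS (vset g H) (g G) := by
  ext k
  constructor
  · rintro ⟨x, hx, rfl⟩
    rcases (hd G H x).1 hx with ⟨G', hG', rfl⟩ | ⟨H', hH', rfl⟩
    · exact Or.inl ⟨g G', ⟨G', hG', rfl⟩, (h1 G' hG').symm⟩
    · exact Or.inr ⟨g H', ⟨H', hH', rfl⟩, by rw [h2 H' hH', Nat.xor_comm]⟩
  · rintro (⟨x, ⟨G', hG', rfl⟩, rfl⟩ | ⟨x, ⟨H', hH', rfl⟩, rfl⟩)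
    · exact ⟨d G' H, (hd G H _).2 (Or.inl ⟨G', hG', rfl⟩), h1 G' hG'⟩
    · exact ⟨d G H', (hd G H _).2 (Or.inr ⟨H', hH', rfl⟩), by rw [h2 H' hH', Nat.xor_comm]⟩

lemma grundy_dsum {d : ZFSet → ZFSet → ZFSet} (hd : IsDSum d) {g : ZFSet → ℕ}
    (hg : IsGrundy g) :
    ∀ s n m G H, n + m = s → G ∈ Gn n → H ∈ Gn m → g (d G H) = g G ^^^ g H := by
  intro s
  induction s using Nat.strong_induction_on with
  | _ s IH =>
    intro n m G H hs hG hH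
    have h1 : ∀ G' ∈ G, g (d G' H) = g G' ^^^ g H := by
      intro G' hG'
      cases n with
      | zero => rw [Gn_zero_eq hG] at hG'; exact absurd hG' (ZFSet.notMem_empty _)
      | succ p =>
        exact IH (p + m) (by omega) p m G' H rfl (option_mem_Gn hG hG') hH
    have h2 : ∀ H' ∈ H, g (d G H') = g G ^^^ g H' := by
      intro H' hH'
      cases m with
      | zero => rw [Gn_zero_eq hH] at hH'; exact absurd hH' (ZFSet.notMem_empty _)
      | succ p =>
        exact IH (n + p) (by omega) n p G H' rfl hG (option_mem_Gn hH hH')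
    have hv := vset_dsum hd h1 h2
    have hgG : g G = mexS (vset g G) := hg G
    have hgH : g H = mexS (vset g H) := hg H
    calc g (d G H) = mexS (vset g (d G H)) := hg (d G H)
      _ = mexS (xorS (vset g G) (g H) ∪ xorS (vset g H) (g G)) := by rw [hv]
      _ = mexS (xorS (vset g G) (mexS (vset g H)) ∪ xorS (vset g H) (mexS (vset g G))) := by
          rw [hgG, hgH]
      _ = mexS (vset g G) ^^^ mexS (vset g H) := mexS_xor (vset_finite hG) (vset_finite hH)
      _ = g G ^^^ g H := by rw [hgG, hgH]

theorem stmt18 (d : ZFSet → ZFSet → ZFSet) (hd : IsDSum d)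
    (g : ZFSet → ℕ) (hg : IsGrundy g)
    (G H : ZFSet) (hG : IsGame G) (hH : IsGame H) :
    vset g (d G H) = xorS (vset g G) (mexS (vset g H)) ∪ xorS (vset g H) (mexS (vset g G)) := by
  obtain ⟨n, hGn⟩ := hG
  obtain ⟨m, hHm⟩ := hH
  have h1 : ∀ G' ∈ G, g (d G' H) = g G' ^^^ g H := by
    intro G' hG'
    cases n with
    | zero => rw [Gn_zero_eq hGn] at hG'; exact absurd hG' (ZFSet.notMem_empty _)
    | succ p => exact grundy_dsum hd hg (p + m) p m G' H rfl (option_mem_Gn hGn hG') hHm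
  have h2 : ∀ H' ∈ H, g (d G H') = g G ^^^ g H' := by
    intro H' hH'
    cases m with
    | zero => rw [Gn_zero_eq hHm] at hH'; exact absurd hH' (ZFSet.notMem_empty _)
    | succ p => exact grundy_dsum hd hg (n + p) n p G H' rfl hGn (option_mem_Gn hHm hH')
  rw [vset_dsum hd h1 h2, hg G, hg H]
  rfl
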